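/- arXiv:2506.19810 — 2 statements merged into one kernel-verified Lean document; each statement's English description precedes it below -/
import Mathlib

section
/- For any Y-lattice Λ on a finite set Y, the VC dimension of Λ equals the maximum over all subsets A ⊆ Y of the Λ-complexity C_Λ(A). -/
/-- A `Y`-lattice: a family of subsets of `Y` containing `Y` itself and closed
under binary intersections. -/
def IsYLattice {Y : Type} (L : Set (Set Y)) : Prop :=
  Set.univ ∈ L ∧ ∀ A ∈ L, ∀ B ∈ L, A ∩ B ∈ L

/-- The `Λ`-hull of `A`: the intersection of all members of `Λ` containing `A`. -/
def latHull {Y : Type} (L : Set (Set Y)) (A : Set Y) : Set Y :=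
  ⋂₀ {B | B ∈ L ∧ A ⊆ B}

/-- The `Λ`-complexity of `A`: minimal cardinality of `B ⊆ A` with `A ⊆ hull(B)`. -/
noncomputable def latComplexity {Y : Type} (L : Set (Set Y)) (A : Set Y) : ℕ :=
  sInf {n : ℕ | ∃ B : Set Y, B ⊆ A ∧ B.ncard = n ∧ A ⊆ latHull L B}

/-- The pivot dimension of `Λ`: maximal `Λ`-complexity of an element of `Λ`. -/
noncomputable def PDim {Y : Type} (L : Set (Set Y)) : ℕ :=
  sSup {n : ℕ | ∃ A ∈ L, n = latComplexity L A}

/-- `Λ` shatters `S` if every subset of `S` is a trace `S ∩ C` for some `C ∈ Λ`. -/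
def Shatters {Y : Type} (L : Set (Set Y)) (S : Set Y) : Prop :=
  ∀ B ⊆ S, ∃ C ∈ L, S ∩ C = B

/-- VC dimension of the family `Λ`. -/
noncomputable def VCdim {Y : Type} (L : Set (Set Y)) : ℕ :=
  sSup {n : ℕ | ∃ S : Set Y, Shatters L S ∧ S.ncard = n}

/-- `Λ(H)`: the minimal `Y`-lattice containing every value `h x` for `h ∈ H`. -/
def LamH {X Y : Type} (H : Set (X → Set Y)) : Set (Set Y) :=
  {A | ∀ L : Set (Set Y), IsYLattice L → (∀ h ∈ H, ∀ x : X, h x ∈ L) → A ∈ L}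

/-!
A minimum-size `B ⊆ A` with `A ⊆ hull B` is shattered: if some `x ∈ B \ B'` lay in
`hull B'`, then `x ∈ hull (B \ {x})`, so `B \ {x}` would already generate `A`. Conversely a
shattered set `S` is generated by no proper subset `B`: a member of `Λ` cutting out
`S \ {b}` with `b ∉ B` contains `hull B` but misses `b`. So the complexities of subsets of `Y`
are exactly the sizes of shattered sets.
-/

section latHull

variable {Y : Type} {L : Set (Set Y)}

lemma subset_latHull (A : Set Y) : A ⊆ latHull L A :=
  fun _ hx => Set.mem_sInter.2 fun _ hB => hB.2 hx

lemma latHull_subset_of_mem {A C : Set Y} (hC : C ∈ L) (h : A ⊆ C) : latHull L A ⊆ C :=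
  Set.sInter_subset_of_mem ⟨hC, h⟩

lemma latHull_mono {A B : Set Y} (h : A ⊆ B) : latHull L A ⊆ latHull L B :=
  Set.sInter_subset_sInter fun _ hC => ⟨hC.1, h.trans hC.2⟩

end latHull

namespace IsYLattice

variable {Y : Type} {L : Set (Set Y)} [Finite Y]

lemma sInter_mem (hL : IsYLattice L) {F : Set (Set Y)} (hF : F ⊆ L) : ⋂₀ F ∈ L := by
  induction F, Set.toFinite F using Set.Finite.induction_on with
  | empty => simpa using hL.1
  | @insert C F _ _ ih =>
    rw [Set.sInter_insert]
    exact hL.2 _ (hF (Set.mem_insert _ _)) _ (ih ((Set.subset_insert _ _).trans hF))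

lemma latHull_mem (hL : IsYLattice L) (A : Set Y) : latHull L A ∈ L :=
  hL.sInter_mem fun _ hB => hB.1

lemma shatters_of_minimal (hL : IsYLattice L) {A B : Set Y} (hA : A ⊆ latHull L B)
    (hmin : ∀ b ∈ B, ¬ A ⊆ latHull L (B \ {b})) : Shatters L B := by
  intro B' hB'
  refine ⟨latHull L B', hL.latHull_mem _, Set.Subset.antisymm ?_
    fun x hx => ⟨hB' hx, subset_latHull _ hx⟩⟩
  rintro x ⟨hxB, hxH⟩
  by_contra hxB'
  have hB'_sub : B' ⊆ B \ {x} := fun y hy => ⟨hB' hy, fun he => hxB' (he ▸ hy)⟩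
  have hB_sub : B ⊆ latHull L (B \ {x}) := by
    intro y hy
    by_cases hyx : y = x
    · exact hyx ▸ latHull_mono hB'_sub hxH
    · exact subset_latHull _ ⟨hy, hyx⟩
  exact hmin x hxB (hA.trans (latHull_subset_of_mem (hL.latHull_mem _) hB_sub))

lemma exists_shatters_ncard_eq_latComplexity (hL : IsYLattice L) (A : Set Y) :
    ∃ S, Shatters L S ∧ S.ncard = latComplexity L A := by
  obtain ⟨B, hBA, hBn, hAB⟩ :
      latComplexity L A ∈ {n | ∃ B, B ⊆ A ∧ B.ncard = n ∧ A ⊆ latHull L B} :=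
    Nat.sInf_mem ⟨A.ncard, A, subset_rfl, rfl, subset_latHull A⟩
  refine ⟨B, hL.shatters_of_minimal hAB fun b hb hAb => ?_, hBn⟩
  have hle : latComplexity L A ≤ (B \ {b}).ncard :=
    Nat.sInf_le ⟨B \ {b}, Set.sdiff_subset.trans hBA, rfl, hAb⟩
  have hlt : (B \ {b}).ncard < B.ncard := Set.ncard_sdiff_singleton_lt_of_mem hb
  omega

end IsYLattice

namespace Shatters

variable {Y : Type} {L : Set (Set Y)}

lemma eq_of_subset_latHull {S B : Set Y} (hS : Shatters L S) (hBS : B ⊆ S)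
    (hSB : S ⊆ latHull L B) : B = S := by
  by_contra hne
  obtain ⟨b, hbS, hbB⟩ := Set.exists_of_ssubset (hBS.ssubset_of_ne hne)
  obtain ⟨C, hCL, hC⟩ := hS (S \ {b}) Set.sdiff_subset
  have hBC : B ⊆ C := fun y hy => by
    have hy' : y ∈ S ∩ C := hC ▸ ⟨hBS hy, fun he => hbB (he ▸ hy)⟩
    exact hy'.2
  have hbC : b ∈ S ∩ C := ⟨hbS, latHull_subset_of_mem hCL hBC (hSB hbS)⟩
  exact (hC ▸ hbC).2 rfl

lemma latComplexity_eq_ncard {S : Set Y} (hS : Shatters L S) :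
    latComplexity L S = S.ncard := by
  refine le_antisymm (Nat.sInf_le ⟨S, subset_rfl, rfl, subset_latHull S⟩) ?_
  refine le_csInf ⟨S.ncard, S, subset_rfl, rfl, subset_latHull S⟩ ?_
  rintro n ⟨B, hBS, rfl, hSB⟩
  rw [hS.eq_of_subset_latHull hBS hSB]

end Shatters

/-- For any `Y`-lattice `Λ` on a finite set `Y`, the VC dimension of
`Λ` equals the maximum over all subsets `A ⊆ Y` of the `Λ`-complexity of `A`. -/
theorem vcDim_eq_max_latComplexity {Y : Type} [Fintype Y] (L : Set (Set Y))
    (hL : IsYLattice L) :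
    VCdim L = sSup {n : ℕ | ∃ A : Set Y, n = latComplexity L A} := by
  have hsizes : {n : ℕ | ∃ S : Set Y, Shatters L S ∧ S.ncard = n}
      = {n : ℕ | ∃ A : Set Y, n = latComplexity L A} := by
    ext n
    constructor
    · rintro ⟨S, hS, rfl⟩
      exact ⟨S, hS.latComplexity_eq_ncard.symm⟩
    · rintro ⟨A, rfl⟩
      exact hL.exists_shatters_ncard_eq_latComplexity A
  rw [VCdim, hsizes]
end

section
/- For each n ≥ 1, let X = [n], Y = {0,1}, and for k < n define h_k : [n] → 2^{{0,1}} by h_k(x) = {1} if x = k and h_k(x) = {0,1} otherwise. Let H_n = {h_k : k < n}. Then there exists an ambiguous shattered H_n-tree of depth at most n² and rank n − 1; consequently AL(H_n, n²) = n − 1 (using the upper bound AL ≤ |H| − 1). -/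
/-- A finite rooted tree: vertices, a root, and a parent map under which every
vertex reaches the root. -/
structure RTree where
  V : Type
  [fin : Fintype V]
  root : V
  parent : V → V
  parent_root : parent root = root
  reaches : ∀ v : V, ∃ k : ℕ, parent^[k] v = root

namespace RTree

/-- Children of a vertex (the root is not a child of anything). -/
def children (t : RTree) (v : t.V) : Set t.V := {w | t.parent w = v ∧ w ≠ t.root}

def IsLeaf (t : RTree) (v : t.V) : Prop := t.children v = ∅

/-- `a` is an ancestor (or equal to) `u`. -/
def Anc (t : RTree) (a u : t.V) : Prop := ∃ k : ℕ, t.parent^[k] u = a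

noncomputable def depthOf (t : RTree) (v : t.V) : ℕ := sInf {k : ℕ | t.parent^[k] v = t.root}

noncomputable def depth (t : RTree) : ℕ := sSup {n : ℕ | ∃ v : t.V, n = t.depthOf v}

end RTree

/-- An ambiguous shattered `H`-tree: internal vertices carry instances, non-root
vertices (identified with the edges to their parents) carry labels, distinct among
siblings, leaves carry hypotheses from `H` compatible with all edge labels above
them, and `E0` selects exactly one child edge of each internal vertex. -/
structure AmbTree (X Y : Type) (H : Set (X → Set Y)) where
  t : RTree
  xlab : t.V → X
  ylab : t.V → Y
  hlab : t.V → (X → Set Y)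
  E0 : Set t.V
  e0_ne_root : ∀ a ∈ E0, a ≠ t.root
  e0_unique : ∀ v : t.V, (t.children v).Nonempty → ∃! a : t.V, a ∈ t.children v ∩ E0
  sib_distinct : ∀ a b : t.V, a ≠ t.root → b ≠ t.root →
    t.parent a = t.parent b → a ≠ b → ylab a ≠ ylab b
  hlab_mem : ∀ u : t.V, t.IsLeaf u → hlab u ∈ H
  path_mem : ∀ u a : t.V, t.IsLeaf u → t.Anc a u → a ≠ t.root →
    ylab a ∈ hlab u (xlab (t.parent a))

namespace AmbTree

variable {X Y : Type} {H : Set (X → Set Y)}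

/-- Edge `a` (on the root-to-`u` path) is relevant to leaf `u`. -/
def Relevant (T : AmbTree X Y H) (a u : T.t.V) : Prop :=
  a ≠ T.t.root ∧ T.t.Anc a u ∧
    (a ∉ T.E0 ∨ ∃ b : T.t.V, T.t.parent b = T.t.parent a ∧ b ≠ T.t.root ∧
      T.ylab b ∉ T.hlab u (T.xlab (T.t.parent a)))

noncomputable def relCount (T : AmbTree X Y H) (u : T.t.V) : ℕ :=
  {a : T.t.V | T.Relevant a u}.ncard

/-- Rank: the minimum over leaves of the number of relevant edges. -/
noncomputable def rank (T : AmbTree X Y H) : ℕ :=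
  sInf {n : ℕ | ∃ u : T.t.V, T.t.IsLeaf u ∧ n = T.relCount u}

noncomputable def depth (T : AmbTree X Y H) : ℕ := T.t.depth

end AmbTree

/-- `AL(H, N)`: the maximal rank of an ambiguous shattered `H`-tree of depth at most `N`. -/
noncomputable def ALn (X Y : Type) (H : Set (X → Set Y)) (N : ℕ) : ℕ :=
  sSup {r : ℕ | ∃ T : AmbTree X Y H, T.depth ≤ N ∧ r = T.rank}

/-- The hypothesis class of Example `ex_fin_deltas`: `h_k x = {1}` if `x = k`,
and `{0,1}` otherwise (labels `Bool`, with `1 = true`). -/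
def Hdeltas (n : ℕ) : Set (Fin n → Set Bool) :=
  {h | ∃ k : Fin n, h = fun x => if x = k then {true} else Set.univ}

/-!
Upper bound, for any finite `H`: walk down from the root, following an edge whose label is
rejected by some hypothesis consistent with the path so far whenever there is one, and the `E0`
edge otherwise. An `E0` edge taken is irrelevant to the leaf reached, since that leaf's hypothesis
is consistent with the path; every other step shrinks the version space, which still contains the
leaf's hypothesis at the end. Hence at most `|H| - 1` edges are relevant to that leaf.

Lower bound, with `m = n - 1`: the complete binary tree of depth `m²` whose depths form `m` blocks
of length `m`, block `j` querying the instance `j`, with `E0` the `1`-edges. A leaf whose word has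
an all-`1` block `j` carries `h_j`, and each edge of that block is relevant because its `0`-sibling
contradicts `h_j`; any other leaf carries `h_m`, and the `0`-edge in each block is relevant as a
non-`E0` edge.
-/

attribute [instance] RTree.fin

namespace RTree

variable {t : RTree}

theorem anc_refl (v : t.V) : t.Anc v v := ⟨0, rfl⟩

theorem anc_trans {a b c : t.V} (hab : t.Anc a b) (hbc : t.Anc b c) : t.Anc a c := by
  obtain ⟨i, rfl⟩ := hab
  obtain ⟨j, rfl⟩ := hbc
  exact ⟨i + j, Function.iterate_add_apply _ _ _ _⟩

theorem anc_of_mem_children {c v : t.V} (hc : c ∈ t.children v) : t.Anc v c := ⟨1, hc.1⟩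

theorem anc_root (v : t.V) : t.Anc t.root v := t.reaches v

theorem anc_total {a b u : t.V} (ha : t.Anc a u) (hb : t.Anc b u) : t.Anc a b ∨ t.Anc b a := by
  obtain ⟨i, rfl⟩ := ha
  obtain ⟨j, rfl⟩ := hb
  rcases le_total i j with h | h
  · exact Or.inr ⟨j - i, by rw [← Function.iterate_add_apply, Nat.sub_add_cancel h]⟩
  · exact Or.inl ⟨i - j, by rw [← Function.iterate_add_apply, Nat.sub_add_cancel h]⟩

theorem eq_root_of_iterate_eq {w : t.V} {m : ℕ} (h : t.parent^[m + 1] w = w) : w = t.root := by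
  obtain ⟨N, hN⟩ := t.reaches w
  have hper : t.parent^[(m + 1) * N] w = w := Function.IsPeriodicPt.mul_const h N
  rw [← hper, add_mul, one_mul, Function.iterate_add_apply, hN,
    Function.iterate_fixed t.parent_root]

theorem eq_root_of_anc_of_anc_parent {a w : t.V} (haw : t.Anc a w) (hwa : t.Anc w (t.parent a)) :
    a = t.root := by
  obtain ⟨i, rfl⟩ := haw
  obtain ⟨j, hj⟩ := hwa
  refine eq_root_of_iterate_eq (m := i + j) ?_
  calc t.parent^[i + j + 1] (t.parent^[i] w)
      = t.parent^[i] (t.parent^[j] (t.parent (t.parent^[i] w))) := by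
        rw [Nat.add_assoc, Function.iterate_add_apply, Function.iterate_succ_apply]
    _ = t.parent^[i] w := by rw [hj]

theorem ncard_anc_lt_of_mem_children {c v : t.V} (hc : c ∈ t.children v) :
    {w | t.Anc c w}.ncard < {w | t.Anc v w}.ncard := by
  refine Set.ncard_lt_ncard ⟨fun w hw => anc_trans (anc_of_mem_children hc) hw, fun hsub => ?_⟩
  exact hc.2 (eq_root_of_anc_of_anc_parent (hsub (anc_refl v)) (hc.1 ▸ anc_refl v))

theorem induction_children {P : t.V → Prop} (h : ∀ v, (∀ c ∈ t.children v, P c) → P v)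
    (v : t.V) : P v := by
  induction hk : {w | t.Anc v w}.ncard using Nat.strong_induction_on generalizing v with
  | _ k ih => exact h v fun c hc => ih _ (hk ▸ ncard_anc_lt_of_mem_children hc) c rfl

theorem eq_or_anc_parent_of_mem_children {a c u v : t.V} (hc : c ∈ t.children v)
    (hcu : t.Anc c u) (hau : t.Anc a u) (ha : a ≠ t.root) (hva : t.Anc v (t.parent a)) :
    a = c ∨ t.Anc c (t.parent a) := by
  rcases anc_total hau hcu with ⟨_ | i, rfl⟩ | ⟨_ | i, hi⟩
  · exact Or.inl rfl
  · exact absurd (eq_root_of_anc_of_anc_parent ⟨i, by rw [← hc.1]; rfl⟩ hva) ha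
  · exact Or.inl hi
  · exact Or.inr ⟨i, hi⟩

end RTree

namespace AmbTree

variable {X Y : Type} {H : Set (X → Set Y)} (T : AmbTree X Y H)

def versionSpace (v : T.t.V) : Set (X → Set Y) :=
  {h ∈ H | ∀ a, T.t.Anc a v → a ≠ T.t.root → T.ylab a ∈ h (T.xlab (T.t.parent a))}

theorem versionSpace_anti {v w : T.t.V} (h : T.t.Anc v w) :
    T.versionSpace w ⊆ T.versionSpace v :=
  fun _ hg => ⟨hg.1, fun a hav ha => hg.2 a (RTree.anc_trans hav h) ha⟩

theorem hlab_mem_versionSpace {u : T.t.V} (hu : T.t.IsLeaf u) : T.hlab u ∈ T.versionSpace u :=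
  ⟨T.hlab_mem u hu, fun a hau ha => T.path_mem u a hu hau ha⟩

theorem exists_leaf_ncard_relevant_add_le (hH : H.Finite) (v : T.t.V) :
    ∃ u, T.t.IsLeaf u ∧ T.t.Anc v u ∧
      {a | T.Relevant a u ∧ T.t.Anc v (T.t.parent a)}.ncard + (T.versionSpace u).ncard ≤
        (T.versionSpace v).ncard := by
  have hfin (w : T.t.V) : (T.versionSpace w).Finite := hH.subset fun _ hg => hg.1
  induction v using RTree.induction_children with
  | h v ih =>
  by_cases hleaf : T.t.IsLeaf v
  · refine ⟨v, hleaf, RTree.anc_refl v, ?_⟩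
    have hempty : {a | T.Relevant a v ∧ T.t.Anc v (T.t.parent a)} = ∅ :=
      Set.eq_empty_of_forall_notMem fun a ⟨⟨ha, hav, _⟩, hva⟩ =>
        ha (RTree.eq_root_of_anc_of_anc_parent hav hva)
    simp [hempty]
  by_cases hsplit : ∃ c ∈ T.t.children v, ∃ g ∈ T.versionSpace v, T.ylab c ∉ g (T.xlab v)
  · obtain ⟨c, hc, g, hg, hgc⟩ := hsplit
    obtain ⟨u, hu, hcu, hle⟩ := ih c hc
    have hvc := RTree.anc_of_mem_children hc
    have hsub : {a | T.Relevant a u ∧ T.t.Anc v (T.t.parent a)} ⊆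
        insert c {a | T.Relevant a u ∧ T.t.Anc c (T.t.parent a)} := fun a ⟨hrel, hva⟩ =>
      (RTree.eq_or_anc_parent_of_mem_children hc hcu hrel.2.1 hrel.1 hva).imp id (⟨hrel, ·⟩)
    have hshrink : (T.versionSpace c).ncard < (T.versionSpace v).ncard := by
      refine Set.ncard_lt_ncard ⟨T.versionSpace_anti hvc, fun hvs => hgc ?_⟩ (hfin v)
      simpa only [hc.1] using (hvs hg).2 c (RTree.anc_refl c) hc.2
    refine ⟨u, hu, RTree.anc_trans hvc hcu, ?_⟩
    have := (Set.ncard_le_ncard hsub).trans (Set.ncard_insert_le _ _)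
    omega
  · push Not at hsplit
    obtain ⟨c, ⟨hc, hcE⟩, -⟩ := T.e0_unique v (Set.nonempty_iff_ne_empty.2 hleaf)
    obtain ⟨u, hu, hcu, hle⟩ := ih c hc
    have hvc := RTree.anc_of_mem_children hc
    have hcrel : ¬ T.Relevant c u := by
      rintro ⟨-, -, hnot | ⟨b, hb, hbr, hbu⟩⟩
      · exact hnot hcE
      · rw [hc.1] at hb hbu
        exact hbu (hsplit b ⟨hb, hbr⟩ _
          (T.versionSpace_anti (RTree.anc_trans hvc hcu) (T.hlab_mem_versionSpace hu)))
    have hsub : {a | T.Relevant a u ∧ T.t.Anc v (T.t.parent a)} ⊆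
        {a | T.Relevant a u ∧ T.t.Anc c (T.t.parent a)} := fun a ⟨hrel, hva⟩ =>
      ⟨hrel, (RTree.eq_or_anc_parent_of_mem_children hc hcu hrel.2.1 hrel.1 hva).resolve_left
        fun hac => hcrel (hac ▸ hrel)⟩
    refine ⟨u, hu, RTree.anc_trans hvc hcu, ?_⟩
    have := Set.ncard_le_ncard hsub
    have := Set.ncard_le_ncard (T.versionSpace_anti hvc) (hfin v)
    omega

theorem rank_le_ncard_sub_one (hH : H.Finite) : T.rank ≤ H.ncard - 1 := by
  obtain ⟨u, hu, -, hle⟩ := T.exists_leaf_ncard_relevant_add_le hH T.t.root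
  have hrel : {a | T.Relevant a u ∧ T.t.Anc T.t.root (T.t.parent a)} = {a | T.Relevant a u} :=
    Set.ext fun a => and_iff_left (RTree.anc_root _)
  have hpos : 0 < (T.versionSpace u).ncard :=
    (Set.ncard_pos (hH.subset fun _ hg => hg.1)).2 ⟨_, T.hlab_mem_versionSpace hu⟩
  have hroot : (T.versionSpace T.t.root).ncard ≤ H.ncard :=
    Set.ncard_le_ncard (fun _ hg => hg.1) hH
  calc T.rank ≤ T.relCount u := Nat.sInf_le ⟨u, hu, rfl⟩
    _ ≤ H.ncard - 1 := by rw [relCount, ← hrel]; omega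

end AmbTree

theorem ALn_le_ncard_sub_one {X Y : Type} {H : Set (X → Set Y)} (hH : H.Finite) (N : ℕ) :
    ALn X Y H N ≤ H.ncard - 1 :=
  csSup_le' fun _ ⟨T, _, hr⟩ => hr ▸ T.rank_le_ncard_sub_one hH

theorem rank_le_ALn {X Y : Type} {H : Set (X → Set Y)} (hH : H.Finite) {N : ℕ}
    (T : AmbTree X Y H) (hT : T.depth ≤ N) : T.rank ≤ ALn X Y H N :=
  le_csSup ⟨H.ncard - 1, fun _ ⟨T', _, hr⟩ => hr ▸ T'.rank_le_ncard_sub_one hH⟩ ⟨T, hT, rfl⟩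

theorem List.take_add_one_eq_append_getD {α : Type*} {l : List α} {i : ℕ} (hi : i < l.length)
    (d : α) : l.take (i + 1) = l.take i ++ [l.getD i d] := by
  rw [List.getD_eq_getElem _ _ hi, List.take_append_getElem]

namespace RTree

variable {d : ℕ}

def dropLastLE (d : ℕ) (l : {l : List Bool // l.length ≤ d}) :
    {l : List Bool // l.length ≤ d} :=
  ⟨l.1.dropLast, List.length_dropLast ▸ (Nat.sub_le _ 1).trans l.2⟩

@[simp]
theorem val_dropLastLE (l : {l : List Bool // l.length ≤ d}) :
    (dropLastLE d l).1 = l.1.dropLast :=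
  rfl

theorem val_dropLastLE_iterate (l : {l : List Bool // l.length ≤ d}) (k : ℕ) :
    ((dropLastLE d)^[k] l).1 = l.1.take (l.1.length - k) := by
  induction k with
  | zero => simp
  | succ k ih =>
    rw [Function.iterate_succ_apply', val_dropLastLE, ih, List.dropLast_eq_take, List.length_take,
      List.take_take]
    congr 1
    omega

noncomputable def binary (d : ℕ) : RTree where
  V := {l : List Bool // l.length ≤ d}
  fin := (List.finite_length_le Bool d).fintype
  root := ⟨[], Nat.zero_le d⟩
  parent := dropLastLE d
  parent_root := rfl
  reaches l := ⟨l.1.length, Subtype.ext (by simp [val_dropLastLE_iterate])⟩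

theorem anc_binary_iff {a u : (binary d).V} : (binary d).Anc a u ↔ ∃ m, a.1 = u.1.take m := by
  constructor
  · rintro ⟨k, rfl⟩
    exact ⟨_, val_dropLastLE_iterate u k⟩
  · rintro ⟨m, hm⟩
    refine ⟨u.1.length - m, Subtype.ext ((val_dropLastLE_iterate u _).trans ?_)⟩
    rw [hm, List.take_eq_take_iff]
    omega

theorem mem_children_binary_iff {v w : (binary d).V} :
    w ∈ (binary d).children v ↔ ∃ b, w.1 = v.1 ++ [b] := by
  constructor
  · rintro ⟨hwv, hw⟩
    have hne : w.1 ≠ [] := fun h => hw (Subtype.ext h)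
    have hwv : w.1.dropLast = v.1 := congrArg Subtype.val hwv
    exact ⟨w.1.getLast hne, by rw [← hwv, List.dropLast_append_getLast hne]⟩
  · rintro ⟨b, hb⟩
    refine ⟨Subtype.ext (by simp [binary, dropLastLE, hb]), fun h => ?_⟩
    have hw : w.1 = [] := congrArg Subtype.val h
    simp [hb] at hw

theorem isLeaf_binary_iff {v : (binary d).V} : (binary d).IsLeaf v ↔ v.1.length = d := by
  constructor
  · intro hv
    by_contra hlt
    have hlt : v.1.length + 1 ≤ d := by have := v.2; omega
    have hc : (⟨v.1 ++ [true], by simpa using hlt⟩ : (binary d).V) ∈ (binary d).children v :=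
      mem_children_binary_iff.2 ⟨true, rfl⟩
    rw [IsLeaf] at hv
    exact hv.subset hc
  · intro hv
    refine Set.eq_empty_of_forall_notMem fun w hw => ?_
    obtain ⟨b, hb⟩ := mem_children_binary_iff.1 hw
    have := w.2
    simp [hb] at this
    omega

theorem depth_binary_le : (binary d).depth ≤ d := by
  refine csSup_le' fun _ ⟨v, hv⟩ => hv ▸ (Nat.sInf_le (m := v.1.length) ?_).trans v.2
  exact Subtype.ext ((val_dropLastLE_iterate v _).trans (by simp [binary]))

theorem exists_eq_append_getD_of_anc_binary {a u : (binary d).V} (hau : (binary d).Anc a u)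
    (ha : a ≠ (binary d).root) : ∃ i < u.1.length, a.1 = u.1.take i ++ [u.1.getD i false] := by
  obtain ⟨m, hm⟩ := anc_binary_iff.1 hau
  rw [List.take_eq_take_min] at hm
  have hpos : min m u.1.length ≠ 0 := fun h0 => ha (Subtype.ext (by rw [hm, h0]; rfl))
  refine ⟨min m u.1.length - 1, by omega, ?_⟩
  rw [hm, ← List.take_add_one_eq_append_getD (by omega), Nat.sub_add_cancel (by omega)]

end RTree

namespace AmbTree

variable {X : Type} {H : Set (X → Set Bool)} {d : ℕ} {x : ℕ → X}
  {h : List Bool → X → Set Bool} {hH : ∀ l, h l ∈ H}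
  {hcons : ∀ l : List Bool, l.length = d → ∀ i < d, l.getD i false ∈ h l (x i)}

variable (d x h hH hcons) in
noncomputable def binary : AmbTree X Bool H where
  t := RTree.binary d
  xlab v := x v.1.length
  ylab v := v.1.getLastD false
  hlab v := h v.1
  E0 := {v | v.1.getLast? = some true}
  e0_ne_root a ha hroot := by
    subst hroot
    have hnil : ([] : List Bool).getLast? = some true := ha
    simp at hnil
  e0_unique v := by
    rintro ⟨w, hw⟩
    obtain ⟨b, hb⟩ := RTree.mem_children_binary_iff.1 hw
    have hlen : (v.1 ++ [true]).length ≤ d := by simpa [hb] using w.2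
    refine ⟨⟨v.1 ++ [true], hlen⟩,
      ⟨RTree.mem_children_binary_iff.2 ⟨true, rfl⟩, List.getLast?_concat⟩, ?_⟩
    rintro c ⟨hc, hcE⟩
    obtain ⟨b', hb'⟩ := RTree.mem_children_binary_iff.1 hc
    have hb'true : b' = true := by simpa [hb'] using hcE
    exact Subtype.ext (by rw [hb', hb'true])
  sib_distinct a b ha hb hab hne hlab := by
    obtain ⟨y, hy⟩ := RTree.mem_children_binary_iff.1
      (⟨rfl, ha⟩ : a ∈ (RTree.binary d).children _)
    obtain ⟨z, hz⟩ := RTree.mem_children_binary_iff.1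
      (⟨hab.symm, hb⟩ : b ∈ (RTree.binary d).children _)
    simp only [hy, hz, List.getLastD_concat] at hlab
    exact hne (Subtype.ext (by rw [hy, hz, hlab]))
  hlab_mem u _ := hH u.1
  path_mem u a hu hau ha := by
    obtain ⟨i, hi, hai⟩ := RTree.exists_eq_append_getD_of_anc_binary hau ha
    have hlen := RTree.isLeaf_binary_iff.1 hu
    show a.1.getLastD false ∈ h u.1 (x a.1.dropLast.length)
    rw [hai, List.getLastD_concat, List.dropLast_concat, List.length_take_of_le hi.le]
    exact hcons u.1 hlen i (hlen ▸ hi)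

theorem ncard_le_relCount_binary (u : (RTree.binary d).V) (hu : (RTree.binary d).IsLeaf u) :
    {i | i < d ∧ (u.1.getD i false = false ∨ false ∉ h u.1 (x i))}.ncard ≤
      (binary d x h hH hcons).relCount u := by
  have hlen := RTree.isLeaf_binary_iff.1 hu
  let f : ℕ → (RTree.binary d).V := fun i =>
    ⟨u.1.take (i + 1), (List.length_take_le' _ _).trans u.2⟩
  have hf (i : ℕ) (hi : i < d) : (f i).1 = u.1.take i ++ [u.1.getD i false] :=
    List.take_add_one_eq_append_getD (by omega) _
  refine Set.ncard_le_ncard_of_injOn f ?_ ?_ (Set.toFinite _)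
  · rintro i ⟨hi, hrel⟩
    refine ⟨fun h0 => ?_, RTree.anc_binary_iff.2 ⟨_, rfl⟩, ?_⟩
    · have : (f i).1 = [] := congrArg Subtype.val h0
      simp [hf i hi] at this
    rcases hrel with hfalse | hnot
    · refine Or.inl fun hE => ?_
      have : (f i).1.getLast? = some true := hE
      rw [hf i hi, List.getLast?_concat, hfalse] at this
      cases this
    · let b : (RTree.binary d).V := ⟨u.1.take i ++ [false], by simp; omega⟩
      refine Or.inr ⟨b, Subtype.ext ?_, fun h0 => ?_, ?_⟩
      · show b.1.dropLast = (f i).1.dropLast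
        simp [b, hf i hi]
      · have : b.1 = [] := congrArg Subtype.val h0
        simp [b] at this
      · show b.1.getLastD false ∉ h u.1 (x (f i).1.dropLast.length)
        simpa [b, hf i hi, List.length_take_of_le (hlen ▸ hi).le] using hnot
  · intro i hi j hj hij
    have := congrArg (fun v : (RTree.binary d).V => v.1.length) hij
    simp only [f, List.length_take] at this
    have := hi.1
    have := hj.1
    omega

theorem le_rank_binary {c : ℕ}
    (hc : ∀ l : List Bool, l.length = d →
      c ≤ {i | i < d ∧ (l.getD i false = false ∨ false ∉ h l (x i))}.ncard) :
    c ≤ (binary d x h hH hcons).rank := by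
  refine le_csInf ⟨_, ⟨⟨List.replicate d true, by simp⟩,
    RTree.isLeaf_binary_iff.2 (by simp), rfl⟩⟩ ?_
  rintro _ ⟨u, hu, rfl⟩
  exact (hc u.1 (RTree.isLeaf_binary_iff.1 hu)).trans (ncard_le_relCount_binary u hu)

end AmbTree

def delta {n : ℕ} (k : Fin n) : Fin n → Set Bool := fun x => if x = k then {true} else Set.univ

theorem Hdeltas_eq_range (n : ℕ) : Hdeltas n = Set.range (delta (n := n)) :=
  Set.ext fun _ => ⟨fun ⟨k, hk⟩ => ⟨k, hk.symm⟩, fun ⟨k, hk⟩ => ⟨k, hk.symm⟩⟩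

theorem false_mem_delta_iff {n : ℕ} {k x : Fin n} : false ∈ delta k x ↔ x ≠ k := by
  unfold delta
  split_ifs with h <;> simp [h]

theorem delta_injective (n : ℕ) : Function.Injective (delta (n := n)) := fun j k hjk => by
  by_contra hne
  have hk : false ∈ delta j k := false_mem_delta_iff.2 (Ne.symm hne)
  rw [hjk] at hk
  exact false_mem_delta_iff.1 hk rfl

theorem ncard_Hdeltas (n : ℕ) : (Hdeltas n).ncard = n := by
  rw [Hdeltas_eq_range, Set.ncard_range_of_injective (delta_injective n), Nat.card_eq_fintype_card,
    Fintype.card_fin]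

theorem finite_Hdeltas (n : ℕ) : (Hdeltas n).Finite :=
  Hdeltas_eq_range n ▸ Set.finite_range _

/-- Depths `0, …, m * m - 1` fall into `m` blocks of `m` consecutive depths, block `j` querying
the instance `j`; the instance `m` is never queried. -/
def blockInstance (m i : ℕ) : Fin (m + 1) := Fin.ofNat (m + 1) (i / m)

theorem blockInstance_eq_iff {m i : ℕ} (hi : i < m * m) {k : Fin (m + 1)} :
    blockInstance m i = k ↔ i / m = k := by
  have hlt : i / m < m + 1 := (Nat.div_lt_of_lt_mul hi).trans (Nat.lt_succ_self m)
  rw [blockInstance, Fin.ext_iff, Fin.val_ofNat, Nat.mod_eq_of_lt hlt]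

theorem exists_consistent_le_ncard_relevant (m : ℕ) (w : ℕ → Bool) : ∃ k : Fin (m + 1),
    (∀ i < m * m, blockInstance m i = k → w i = true) ∧
    m ≤ {i | i < m * m ∧ (w i = false ∨ blockInstance m i = k)}.ncard := by
  have hfin (k : Fin (m + 1)) :
      {i | i < m * m ∧ (w i = false ∨ blockInstance m i = k)}.Finite :=
    (Set.finite_Iio (m * m)).subset fun i hi => hi.1
  by_cases hblock : ∃ j < m, ∀ i, i / m = j → w i = true
  · obtain ⟨j, hj, hw⟩ := hblock
    have hpos : 0 < m := by omega
    have hmem (r : ℕ) (hr : r < m) :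
        m * j + r < m * m ∧ blockInstance m (m * j + r) = ⟨j, by omega⟩ := by
      have hlt : m * j + r < m * m := by nlinarith
      refine ⟨hlt, (blockInstance_eq_iff hlt).2 ?_⟩
      simp [Nat.mul_add_div hpos, Nat.div_eq_of_lt hr]
    refine ⟨⟨j, by omega⟩, fun i hi hik => hw i ((blockInstance_eq_iff hi).1 hik), ?_⟩
    refine (by simp : m = (Set.Iio m).ncard).trans_le (Set.ncard_le_ncard_of_injOn
      (fun r => m * j + r) (fun r hr => ⟨(hmem r hr).1, Or.inr (hmem r hr).2⟩)
      (fun r _ s _ hrs => by simpa using hrs) (hfin _))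
  · push Not at hblock
    refine ⟨Fin.last m, fun i hi hik => ?_, ?_⟩
    · have := (blockInstance_eq_iff hi).1 hik
      have := Nat.div_lt_of_lt_mul hi
      simp_all
    · have hsub : Set.Iio m ⊆ (· / m) ''
          {i | i < m * m ∧ (w i = false ∨ blockInstance m i = Fin.last m)} := by
        intro j (hj : j < m)
        obtain ⟨i, hij, hwi⟩ := hblock j hj
        refine ⟨i, ⟨?_, Or.inl (by simpa using hwi)⟩, hij⟩
        rw [← Nat.div_lt_iff_lt_mul (by omega)]
        exact hij ▸ hj
      exact (by simp : m = (Set.Iio m).ncard).trans_le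
        ((Set.ncard_le_ncard hsub ((hfin _).image _)).trans (Set.ncard_image_le (hfin _)))

theorem exists_Hdeltas_tree (m : ℕ) :
    ∃ T : AmbTree (Fin (m + 1)) Bool (Hdeltas (m + 1)), T.depth ≤ m * m ∧ m ≤ T.rank := by
  choose k hcons hcount using
    fun l : List Bool => exists_consistent_le_ncard_relevant m fun i => l.getD i false
  refine ⟨AmbTree.binary (m * m) (blockInstance m) (fun l => delta (k l)) (fun l => ⟨k l, rfl⟩)
    ?_, RTree.depth_binary_le, AmbTree.le_rank_binary fun l _ => ?_⟩
  · intro l _ i hi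
    by_cases hik : blockInstance m i = k l
    · simpa [delta, hik] using hcons l i hi hik
    · simp [delta, hik]
  · simpa only [false_mem_delta_iff, not_not] using hcount l

/-- there is an ambiguous shattered `H_n`-tree of depth at most `n²`
and rank `n - 1`; consequently `AL(H_n, n²) = n - 1`. -/
theorem al_Hdeltas (n : ℕ) (hn : 1 ≤ n) :
    (∃ T : AmbTree (Fin n) Bool (Hdeltas n), T.depth ≤ n ^ 2 ∧ T.rank = n - 1) ∧
      ALn (Fin n) Bool (Hdeltas n) (n ^ 2) = n - 1 := by
  obtain ⟨m, rfl⟩ : ∃ m, n = m + 1 := ⟨n - 1, by omega⟩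
  have hcard : (Hdeltas (m + 1)).ncard - 1 = m + 1 - 1 := by rw [ncard_Hdeltas]
  obtain ⟨T, hdepth, hrank⟩ := exists_Hdeltas_tree m
  have hT : T.depth ≤ (m + 1) ^ 2 := hdepth.trans (by nlinarith)
  have hupper := T.rank_le_ncard_sub_one (finite_Hdeltas _)
  refine ⟨⟨T, hT, by omega⟩, le_antisymm ?_ ?_⟩
  · exact hcard ▸ ALn_le_ncard_sub_one (finite_Hdeltas _) _
  · exact (by omega : m + 1 - 1 ≤ T.rank).trans (rank_le_ALn (finite_Hdeltas _) T hT)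
end
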